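/- Let w = pTSq and w' = pSTq be s/t-ballot words with s copies of S and t copies of T. Define Δ = (#STST(w)+#TSTS(w))/2 − (#STST(w')+#TSTS(w'))/2. Then Δ = #S(p)·t − (#T(p)+1)·s + #TS(w) − (s−1)(t−1)/2. -/

import Mathlib

inductive Letter | S | T
deriving DecidableEq, Repr

open Letter

/-- Number of occurrences of `u` as a (not necessarily contiguous) subsequence of `w`. -/
def cnt (u w : List Letter) : ℕ := w.sublists.count u


/-- `w` is an s/t-ballot word. -/
def IsBallot (s t : ℕ) (w : List Letter) : Prop :=
  w.count S = s ∧ w.count T = t ∧ ∀ p, p <+: w → p.count T * s ≤ p.count S * t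


/-! An occurrence of `u` in `w₁ ++ w₂` is an occurrence of a prefix of `u` in `w₁` followed by one
of the remaining suffix in `w₂`. Expanding both words around the two
swapped letters with it, every count becomes a polynomial in the letter counts and the pair
counts `#ST`, `#TS` of `p` and `q`; the pair counts then collapse through
`#ST(x) + #TS(x) = #S(x) * #T(x)`. -/

open Finset

lemma cnt_eq_count_sublists' (u w : List Letter) : cnt u w = w.sublists'.count u :=
  (List.sublists_perm_sublists' w).count_eq u

lemma cnt_cons_right (u : List Letter) (a : Letter) (w : List Letter) :
    cnt u (a :: w) = cnt u w + (w.sublists'.map (a :: ·)).count u := by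
  rw [cnt_eq_count_sublists', List.sublists'_cons, List.count_append, ← cnt_eq_count_sublists']

@[simp] lemma cnt_nil_left (w : List Letter) : cnt [] w = 1 := by
  induction w with
  | nil => rfl
  | cons a w ih => simp [cnt_cons_right, ih, List.count_eq_zero_of_not_mem]

@[simp] lemma cnt_cons_nil (b : Letter) (u : List Letter) : cnt (b :: u) [] = 0 := by
  simp [cnt]

lemma cnt_cons_cons (b a : Letter) (u w : List Letter) :
    cnt (b :: u) (a :: w) = cnt (b :: u) w + if b = a then cnt u w else 0 := by
  rw [cnt_cons_right]
  split_ifs with h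
  · rw [h, List.count_map_of_injective _ _ List.cons_injective, ← cnt_eq_count_sublists']
  · rw [List.count_eq_zero_of_not_mem]
    simp [Ne.symm h]

theorem cnt_append (u w₁ w₂ : List Letter) :
    cnt u (w₁ ++ w₂) = ∑ i ∈ range (u.length + 1), cnt (u.take i) w₁ * cnt (u.drop i) w₂ := by
  induction w₁ generalizing u with
  | nil =>
    cases u with
    | nil => simp
    | cons b u => simp [sum_range_succ' _ (u.length + 1)]
  | cons a w ih =>
    cases u with
    | nil => simp
    | cons b u =>
      rw [List.cons_append, cnt_cons_cons, ih, ih, List.length_cons, sum_range_succ',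
        sum_range_succ' _ (u.length + 1)]
      simp only [List.take_succ_cons, List.drop_succ_cons, cnt_cons_cons, List.take_zero,
        List.drop_zero, cnt_nil_left]
      split_ifs
      · simp only [one_mul, add_mul, sum_add_distrib]
        ring
      · simp only [one_mul, add_zero]

lemma cnt_singleton (x : Letter) (w : List Letter) : cnt [x] w = w.count x := by
  induction w with
  | nil => rfl
  | cons a w ih =>
    rw [cnt_cons_cons, ih, List.count_cons, cnt_nil_left]
    by_cases h : x = a <;> simp [h, Ne.symm]

lemma cnt_pair_add_cnt_pair_swap {x y : Letter} (hxy : x ≠ y) (w : List Letter) :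
    cnt [x, y] w + cnt [y, x] w = w.count x * w.count y := by
  induction w with
  | nil => rfl
  | cons a w ih =>
    simp only [cnt_cons_cons, cnt_singleton, List.count_cons]
    by_cases hx : x = a
    · subst hx
      simp [hxy, Ne.symm hxy]
      linarith
    · by_cases hy : y = a
      · subst hy
        simp [hx, Ne.symm hxy]
        linarith
      · simp [hx, hy, Ne.symm hx, Ne.symm hy, ih]

theorem stmt15_general (s t : ℕ) (p q : List Letter)
    (hw : IsBallot s t (p ++ [T,S] ++ q)) :
    ((cnt [S,T,S,T] (p ++ [T,S] ++ q) + cnt [T,S,T,S] (p ++ [T,S] ++ q) : ℤ)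
        - (cnt [S,T,S,T] (p ++ [S,T] ++ q) + cnt [T,S,T,S] (p ++ [S,T] ++ q) : ℤ))
      = 2 * ((p.count S : ℤ) * t - ((p.count T : ℤ) + 1) * s
          + (cnt [T,S] (p ++ [T,S] ++ q) : ℤ))
        - ((s : ℤ) - 1) * ((t : ℤ) - 1) := by
  obtain ⟨rfl, rfl, -⟩ := hw
  have hp : (cnt [S,T] p + cnt [T,S] p : ℤ) = p.count S * p.count T := by
    exact_mod_cast cnt_pair_add_cnt_pair_swap (by decide) p
  have hq : (cnt [S,T] q + cnt [T,S] q : ℤ) = q.count S * q.count T := by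
    exact_mod_cast cnt_pair_add_cnt_pair_swap (by decide) q
  simp only [List.append_assoc, List.cons_append, List.nil_append, cnt_append, List.length_cons,
    List.length_nil, zero_add, Nat.reduceAdd, sum_range_succ, range_one, sum_singleton,
    List.take_zero, cnt_nil_left, List.drop_zero, cnt_cons_cons, ↓reduceIte, reduceCtorEq,
    add_zero, one_mul, List.take_succ_cons, cnt_singleton, List.drop_succ_cons, List.take_nil,
    List.drop_nil, mul_one, Nat.cast_add, Nat.cast_mul, Nat.cast_one, List.count_append,
    List.count_cons_self, ne_eq, not_false_eq_true, List.count_cons_of_ne]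
  linear_combination -hp - hq

theorem stmt15 (s t : ℕ) (p q : List Letter)
    (hw : IsBallot s t (p ++ [T,S] ++ q)) (hw' : IsBallot s t (p ++ [S,T] ++ q)) :
    ((cnt [S,T,S,T] (p ++ [T,S] ++ q) + cnt [T,S,T,S] (p ++ [T,S] ++ q) : ℤ)
        - (cnt [S,T,S,T] (p ++ [S,T] ++ q) + cnt [T,S,T,S] (p ++ [S,T] ++ q) : ℤ))
      = 2 * ((p.count S : ℤ) * t - ((p.count T : ℤ) + 1) * s
          + (cnt [T,S] (p ++ [T,S] ++ q) : ℤ))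
        - ((s : ℤ) - 1) * ((t : ℤ) - 1) :=
  stmt15_general s t p q hw
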